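/- Let p = x² + y² and q = x³ − 3xy² in ℝ[x,y]. A polynomial f ∈ ℝ[x,y] all of whose coefficients are integers is invariant under the dihedral group D₃ — i.e. f is unchanged under the two substitutions (x,y) ↦ (−x/2 − (√3/2)·y, (√3/2)·x − y/2) (rotation by 2π/3) and (x,y) ↦ (x, −y) (reflection) — if and only if f lies in the ℤ-subalgebra of ℝ[x,y] generated by p and q. In other words, ℝ[x,y]^{D₃} ∩ ℤ[x,y] = ℤ[x² + y², x³ − 3xy²]. -/

import Mathlib

/-!
Invariance under `y ↦ -y` puts `f` in `ℝ[x, y²] = ℝ[p, q][x]`. The coordinate `x` and its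
two images under the rotation are the roots of `4t³ - 3pt - q`, so their power sums lie in
`ℝ[p, q]`, and averaging `f` over the rotation shows `f ∈ ℝ[p, q]`.

For integrality write `f = r(p) + q·g` with `r ∈ ℝ[t]` and `g ∈ ℝ[p, q]`. On the line
`x = 0` we have `p = y²` and `q = 0`, so `f(0, y) = r(y²)` has integer coefficients and hence
so has `r`. Then `q·g = f - r(p)` has integer coefficients, and as `q` is monic in `x`, so has
`g`; induct on the degree in `q`.
-/

open MvPolynomial

namespace MvPolynomial

variable {R S : Type*} [CommRing R] [CommRing S] {n : ℕ}

theorem finSuccEquiv_map (φ : R →+* S) (f : MvPolynomial (Fin (n + 1)) R) :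
    finSuccEquiv S n (map φ f) = (finSuccEquiv R n f).map (map φ) := by
  have : (finSuccEquiv S n).toRingHom.comp (map φ) =
      (Polynomial.mapRingHom (map φ)).comp (finSuccEquiv R n).toRingHom := by
    refine MvPolynomial.ringHom_ext (fun r ↦ ?_) (fun i ↦ ?_)
    · simp [finSuccEquiv_apply]
    · induction i using Fin.cases <;> simp [finSuccEquiv_apply]
  exact congr($this f)

theorem mem_range_map_of_monic_mul [IsDomain S] {φ : R →+* S} (hφ : Function.Injective φ)
    {q : MvPolynomial (Fin (n + 1)) R} (hq : (finSuccEquiv R n q).Monic)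
    {g : MvPolynomial (Fin (n + 1)) S} (hqg : map φ q * g ∈ Set.range (map φ)) :
    g ∈ Set.range (map φ) := by
  obtain ⟨h, hh⟩ := hqg
  have hdvd : finSuccEquiv R n q ∣ finSuccEquiv R n h := by
    rw [← Polynomial.map_dvd_map _ (map_injective φ hφ) hq, ← finSuccEquiv_map,
      ← finSuccEquiv_map, hh, map_mul]
    exact dvd_mul_right _ _
  obtain ⟨k, hk⟩ := hdvd
  have hqk : h = q * (finSuccEquiv R n).symm k :=
    (finSuccEquiv R n).injective (by rw [hk, map_mul, AlgEquiv.apply_symm_apply])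
  have hq0 : map φ q ≠ 0 := fun h0 ↦
    (hq.map (map φ)).ne_zero (by rw [← finSuccEquiv_map, h0, map_zero])
  exact ⟨(finSuccEquiv R n).symm k, mul_left_cancel₀ hq0 (by rw [← map_mul, ← hqk, hh])⟩

end MvPolynomial

namespace DihedralInvariants

open scoped Algebra

noncomputable def reflection (R : Type*) [CommRing R] :
    MvPolynomial (Fin 2) R →ₐ[R] MvPolynomial (Fin 2) R :=
  aeval ![X 0, -X 1]

@[simp]
theorem reflection_X_zero {R : Type*} [CommRing R] : reflection R (X 0) = X 0 := by
  simp [reflection]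

@[simp]
theorem reflection_X_one {R : Type*} [CommRing R] : reflection R (X 1) = -X 1 := by
  simp [reflection]

theorem mem_of_reflection_eq_self {K : Type*} [Field K] [NeZero (2 : K)]
    {B : Subalgebra K (MvPolynomial (Fin 2) K)} (h0 : X 0 ∈ B) (h1 : X 1 ^ 2 ∈ B)
    {f : MvPolynomial (Fin 2) K} (hf : reflection K f = f) : f ∈ B := by
  -- multiplying by `X 1` swaps the even and odd parts, so both must be tracked
  have key : ∀ g, g + reflection K g ∈ B ∧ ∃ b ∈ B, g - reflection K g = X 1 * b := by
    intro g
    induction g using MvPolynomial.induction_on with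
    | C a =>
      have ha : C a ∈ B := B.algebraMap_mem a
      exact ⟨by simpa [reflection] using B.add_mem ha ha, 0, B.zero_mem, by simp [reflection]⟩
    | add g h hg hh =>
      obtain ⟨⟨hg, b, hb, hgb⟩, ⟨hh, c, hc, hhc⟩⟩ := And.intro hg hh
      refine ⟨by simpa only [map_add, add_add_add_comm] using B.add_mem hg hh, b + c,
        B.add_mem hb hc, ?_⟩
      rw [map_add, mul_add, ← hgb, ← hhc]
      ring
    | mul_X g i hg =>
      obtain ⟨hg, b, hb, hgb⟩ := hg
      fin_cases i
      · refine ⟨?_, b * X 0, B.mul_mem hb h0, ?_⟩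
        · simpa [add_mul] using B.mul_mem hg h0
        · simp only [Fin.zero_eta, map_mul, reflection_X_zero]
          linear_combination X 0 * hgb
      · refine ⟨?_, g + reflection K g, hg, ?_⟩
        · have : g * X 1 + reflection K (g * X 1) = X 1 ^ 2 * b := by
            simp only [map_mul, reflection_X_one]
            linear_combination X 1 * hgb
          exact this ▸ B.mul_mem h1 hb
        · simp only [Fin.mk_one, map_mul, reflection_X_one]
          ring
  have h2f : (2 : K) • f ∈ B := by
    simpa [two_smul, hf] using (key f).1
  simpa [smul_smul, inv_mul_cancel₀ (two_ne_zero : (2 : K) ≠ 0)] using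
    B.smul_mem h2f (2⁻¹ : K)

noncomputable def p (R : Type*) [CommRing R] : MvPolynomial (Fin 2) R := X 0 ^ 2 + X 1 ^ 2

noncomputable def q (R : Type*) [CommRing R] : MvPolynomial (Fin 2) R :=
  X 0 ^ 3 - 3 * X 0 * X 1 ^ 2

noncomputable def rotation : MvPolynomial (Fin 2) ℝ →ₐ[ℝ] MvPolynomial (Fin 2) ℝ :=
  aeval ![-(C (1 / 2 : ℝ)) * X 0 - C (Real.sqrt 3 / 2) * X 1,
    C (Real.sqrt 3 / 2) * X 0 - C (1 / 2 : ℝ) * X 1]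

noncomputable def rotationTrace (f : MvPolynomial (Fin 2) ℝ) : MvPolynomial (Fin 2) ℝ :=
  f + rotation f + rotation (rotation f)

theorem eval_rotation (v : Fin 2 → ℝ) (f : MvPolynomial (Fin 2) ℝ) :
    eval v (rotation f) = eval ![-(v 0 / 2) - √3 / 2 * v 1, √3 / 2 * v 0 - v 1 / 2] f := by
  induction f using MvPolynomial.induction_on with
  | C a => simp [rotation]
  | add f g hf hg => simp only [map_add, hf, hg]
  | mul_X f i hf =>
    simp only [map_mul, hf]
    congr 1
    fin_cases i <;> simp [rotation] <;> ring

theorem rotation_p : rotation (p ℝ) = p ℝ := by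
  refine MvPolynomial.funext fun v ↦ ?_
  simp only [p, map_add, map_pow, eval_rotation, eval_X, Matrix.cons_val_zero,
    Matrix.cons_val_one, Matrix.cons_val_fin_one]
  grind [Real.sq_sqrt (show (0 : ℝ) ≤ 3 by norm_num)]

theorem rotation_q : rotation (q ℝ) = q ℝ := by
  refine MvPolynomial.funext fun v ↦ ?_
  simp only [q, map_sub, map_pow, map_mul, eval_rotation, eval_X, eval_ofNat,
    Matrix.cons_val_zero, Matrix.cons_val_one, Matrix.cons_val_fin_one]
  grind [Real.sq_sqrt (show (0 : ℝ) ≤ 3 by norm_num)]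

theorem rotationTrace_X_zero : rotationTrace (X 0) = 0 := by
  refine MvPolynomial.funext fun v ↦ ?_
  simp only [rotationTrace, map_add, map_zero, eval_rotation, eval_X, Matrix.cons_val_zero,
    Matrix.cons_val_one, Matrix.cons_val_fin_one]
  grind [Real.sq_sqrt (show (0 : ℝ) ≤ 3 by norm_num)]

theorem rotationTrace_X_zero_sq : rotationTrace (X 0 ^ 2) = C (3 / 2) * p ℝ := by
  refine MvPolynomial.funext fun v ↦ ?_
  simp only [rotationTrace, p, map_add, map_mul, map_pow, eval_rotation, eval_X, eval_C,
    Matrix.cons_val_zero, Matrix.cons_val_one, Matrix.cons_val_fin_one]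
  grind [Real.sq_sqrt (show (0 : ℝ) ≤ 3 by norm_num)]

theorem reflection_p : reflection ℝ (p ℝ) = p ℝ := by simp [p]

theorem reflection_q : reflection ℝ (q ℝ) = q ℝ := by simp [q, map_ofNat]

theorem rotation_eq_self_of_mem {f : MvPolynomial (Fin 2) ℝ} (hf : f ∈ ℝ[p ℝ, q ℝ]) :
    rotation f = f :=
  AlgHom.adjoin_le_equalizer rotation (AlgHom.id ℝ _)
    (by rintro _ (rfl | rfl) <;> simp [rotation_p, rotation_q]) hf

theorem reflection_eq_self_of_mem {f : MvPolynomial (Fin 2) ℝ} (hf : f ∈ ℝ[p ℝ, q ℝ]) :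
    reflection ℝ f = f :=
  AlgHom.adjoin_le_equalizer (reflection ℝ) (AlgHom.id ℝ _)
    (by rintro _ (rfl | rfl) <;> simp [reflection_p, reflection_q]) hf

theorem rotationTrace_add (f g : MvPolynomial (Fin 2) ℝ) :
    rotationTrace (f + g) = rotationTrace f + rotationTrace g := by
  simp only [rotationTrace, map_add]
  ring

theorem rotationTrace_mul_of_mem {a : MvPolynomial (Fin 2) ℝ} (ha : a ∈ ℝ[p ℝ, q ℝ])
    (g : MvPolynomial (Fin 2) ℝ) : rotationTrace (a * g) = a * rotationTrace g := by
  simp only [rotationTrace, map_mul, rotation_eq_self_of_mem ha]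
  ring

theorem X_zero_pow_add_three (n : ℕ) :
    (X 0 ^ (n + 3) : MvPolynomial (Fin 2) ℝ) =
      C (3 / 4) * p ℝ * X 0 ^ (n + 1) + C (1 / 4) * q ℝ * X 0 ^ n := by
  refine MvPolynomial.funext fun v ↦ ?_
  simp only [p, q, map_add, map_mul, map_sub, map_pow, eval_X, eval_C, eval_ofNat]
  ring

theorem rotationTrace_X_zero_pow_mem (n : ℕ) : rotationTrace (X 0 ^ n) ∈ ℝ[p ℝ, q ℝ] := by
  have hp : p ℝ ∈ ℝ[p ℝ, q ℝ] := Algebra.subset_adjoin (Set.mem_insert _ _)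
  have hq : q ℝ ∈ ℝ[p ℝ, q ℝ] := Algebra.subset_adjoin (Set.mem_insert_of_mem _ rfl)
  induction n using Nat.strong_induction_on with
  | _ n ih =>
    match n with
    | 0 =>
      simp only [rotationTrace, pow_zero, map_one]
      exact add_mem (add_mem (one_mem _) (one_mem _)) (one_mem _)
    | 1 =>
      rw [pow_one, rotationTrace_X_zero]
      exact zero_mem _
    | 2 =>
      rw [rotationTrace_X_zero_sq]
      exact mul_mem (Subalgebra.algebraMap_mem _ _) hp
    | n + 3 =>
      have hp' : C (3 / 4) * p ℝ ∈ ℝ[p ℝ, q ℝ] :=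
        mul_mem (Subalgebra.algebraMap_mem _ _) hp
      have hq' : C (1 / 4) * q ℝ ∈ ℝ[p ℝ, q ℝ] :=
        mul_mem (Subalgebra.algebraMap_mem _ _) hq
      rw [X_zero_pow_add_three, rotationTrace_add, rotationTrace_mul_of_mem hp',
        rotationTrace_mul_of_mem hq']
      exact add_mem (mul_mem hp' (ih _ (by omega))) (mul_mem hq' (ih _ (by omega)))

theorem rotationTrace_mem_of_mem_adjoin {f : MvPolynomial (Fin 2) ℝ}
    (hf : f ∈ Algebra.adjoin ℝ[p ℝ, q ℝ] {X 0}) :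
    rotationTrace f ∈ ℝ[p ℝ, q ℝ] := by
  rw [Algebra.adjoin_singleton_eq_range_aeval] at hf
  obtain ⟨F, rfl⟩ := (AlgHom.mem_range _).mp hf
  clear hf
  induction F using Polynomial.induction_on' with
  | add F G hF hG => simpa only [map_add, rotationTrace_add] using add_mem hF hG
  | monomial n a =>
    rw [Polynomial.aeval_monomial]
    change rotationTrace ((a : MvPolynomial (Fin 2) ℝ) * X 0 ^ n) ∈ ℝ[p ℝ, q ℝ]
    rw [rotationTrace_mul_of_mem a.2]
    exact mul_mem a.2 (rotationTrace_X_zero_pow_mem n)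

theorem mem_adjoin_X_zero_of_reflection_eq_self {f : MvPolynomial (Fin 2) ℝ}
    (hτ : reflection ℝ f = f) : f ∈ Algebra.adjoin ℝ[p ℝ, q ℝ] {X 0} := by
  let B : Subalgebra ℝ (MvPolynomial (Fin 2) ℝ) :=
    (Algebra.adjoin ℝ[p ℝ, q ℝ] {(X 0 : MvPolynomial (Fin 2) ℝ)}).restrictScalars ℝ
  have hx : X 0 ∈ B := (Subalgebra.mem_restrictScalars ℝ).mpr (Algebra.subset_adjoin rfl)
  have hp : p ℝ ∈ B := (Subalgebra.mem_restrictScalars ℝ).mpr <| Subalgebra.algebraMap_mem _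
    (⟨p ℝ, Algebra.subset_adjoin (Set.mem_insert _ _)⟩ : ℝ[p ℝ, q ℝ])
  have hy : X 1 ^ 2 ∈ B := by
    have : (X 1 ^ 2 : MvPolynomial (Fin 2) ℝ) = p ℝ - X 0 ^ 2 := by rw [p]; ring
    exact this ▸ sub_mem hp (pow_mem hx 2)
  exact (Subalgebra.mem_restrictScalars ℝ).mp (mem_of_reflection_eq_self hx hy hτ)

theorem mem_adjoin_of_rotation_reflection {f : MvPolynomial (Fin 2) ℝ} (hσ : rotation f = f)
    (hτ : reflection ℝ f = f) : f ∈ ℝ[p ℝ, q ℝ] := by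
  have h3f : rotationTrace f = (3 : ℝ) • f := by
    rw [rotationTrace, hσ, hσ]
    module
  have := (ℝ[p ℝ, q ℝ]).smul_mem
    (h3f ▸ rotationTrace_mem_of_mem_adjoin (mem_adjoin_X_zero_of_reflection_eq_self hτ)) 3⁻¹
  simpa [smul_smul] using this

noncomputable def intCoeffs : Subalgebra ℤ (MvPolynomial (Fin 2) ℝ) :=
  (map (Int.castRingHom ℝ)).toIntAlgHom.range

theorem mem_intCoeffs_iff {f : MvPolynomial (Fin 2) ℝ} :
    f ∈ intCoeffs ↔ ∀ m, ∃ n : ℤ, f.coeff m = n := by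
  refine ⟨fun ⟨g, hg⟩ m ↦ ⟨g.coeff m, hg ▸ coeff_map _ _ _⟩, fun h ↦ ?_⟩
  obtain ⟨g, hg⟩ : f ∈ Set.range (map (Int.castRingHom ℝ)) := by
    refine mem_range_map_iff_coeffs_subset.mpr fun c hc ↦ ?_
    obtain ⟨m, -, rfl⟩ := mem_coeffs_iff.mp hc
    obtain ⟨n, hn⟩ := h m
    exact ⟨n, hn.symm⟩
  exact ⟨g, hg⟩

theorem map_p : map (Int.castRingHom ℝ) (p ℤ) = p ℝ := by simp [p]

theorem map_q : map (Int.castRingHom ℝ) (q ℤ) = q ℝ := by simp [q]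

theorem adjoin_int_le_intCoeffs : ℤ[p ℝ, q ℝ] ≤ intCoeffs :=
  Algebra.adjoin_le <| by
    rintro _ (rfl | rfl)
    exacts [⟨p ℤ, map_p⟩, ⟨q ℤ, map_q⟩]

theorem adjoin_int_le_adjoin_real : ℤ[p ℝ, q ℝ] ≤ (ℝ[p ℝ, q ℝ]).restrictScalars ℤ :=
  Algebra.adjoin_le Algebra.subset_adjoin

theorem finSuccEquiv_q_monic : (finSuccEquiv ℤ 1 (q ℤ)).Monic := by
  have h1 : finSuccEquiv ℤ 1 (X 1) = Polynomial.C (X 0) := finSuccEquiv_X_succ (j := 0)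
  simp only [q, map_sub, map_mul, map_pow, map_ofNat, finSuccEquiv_X_zero, h1]
  monicity!

theorem mem_intCoeffs_of_q_mul {g : MvPolynomial (Fin 2) ℝ} (h : q ℝ * g ∈ intCoeffs) :
    g ∈ intCoeffs :=
  mem_range_map_of_monic_mul Int.cast_injective finSuccEquiv_q_monic (map_q ▸ h)

noncomputable def restrictToYAxis : MvPolynomial (Fin 2) ℝ →ₐ[ℝ] Polynomial ℝ :=
  aeval ![0, Polynomial.X]

theorem restrictToYAxis_p : restrictToYAxis (p ℝ) = Polynomial.X ^ 2 := by
  simp [restrictToYAxis, p]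

theorem restrictToYAxis_q : restrictToYAxis (q ℝ) = 0 := by simp [restrictToYAxis, q]

theorem restrictToYAxis_aeval_p (a : Polynomial ℝ) :
    restrictToYAxis (Polynomial.aeval (p ℝ) a) = Polynomial.expand ℝ 2 a := by
  rw [← Polynomial.aeval_algHom_apply, restrictToYAxis_p, ← Polynomial.expand_aeval,
    Polynomial.aeval_X_left_apply]

theorem restrictToYAxis_mem_lifts {f : MvPolynomial (Fin 2) ℝ} (hf : f ∈ intCoeffs) :
    restrictToYAxis f ∈ Polynomial.lifts (Int.castRingHom ℝ) := by
  obtain ⟨g, rfl⟩ := hf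
  induction g using MvPolynomial.induction_on with
  | C n => exact ⟨Polynomial.C n, by simp [restrictToYAxis]⟩
  | add g h hg hh => simpa using add_mem hg hh
  | mul_X g i hg =>
    have hX : restrictToYAxis (X i) ∈ Polynomial.lifts (Int.castRingHom ℝ) := by
      fin_cases i
      exacts [⟨0, by simp [restrictToYAxis]⟩, ⟨Polynomial.X, by simp [restrictToYAxis]⟩]
    simpa using mul_mem hg hX

theorem aeval_p_mem_adjoin_int {a : Polynomial ℝ}
    (ha : Polynomial.expand ℝ 2 a ∈ Polynomial.lifts (Int.castRingHom ℝ)) :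
    Polynomial.aeval (p ℝ) a ∈ ℤ[p ℝ, q ℝ] := by
  obtain ⟨b, rfl⟩ : a ∈ Polynomial.lifts (Int.castRingHom ℝ) := by
    rw [Polynomial.lifts_iff_coeff_lifts] at ha ⊢
    intro n
    simpa [Polynomial.coeff_expand_mul two_pos] using ha (n * 2)
  rw [Polynomial.coe_mapRingHom, ← algebraMap_int_eq, Polynomial.aeval_map_algebraMap]
  exact Algebra.adjoin_mono (Set.singleton_subset_iff.mpr (Set.mem_insert _ _))
    (Polynomial.aeval_mem_adjoin_singleton ℤ _)

noncomputable def evalPQ : Polynomial (Polynomial ℝ) →+* MvPolynomial (Fin 2) ℝ :=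
  Polynomial.eval₂RingHom (Polynomial.aeval (p ℝ)).toRingHom (q ℝ)

theorem exists_evalPQ_eq {f : MvPolynomial (Fin 2) ℝ} (hf : f ∈ ℝ[p ℝ, q ℝ]) :
    ∃ F, evalPQ F = f := by
  induction hf using Algebra.adjoin_induction with
  | mem f hf =>
    rcases hf with rfl | rfl
    exacts [⟨Polynomial.C Polynomial.X, by simp [evalPQ]⟩, ⟨Polynomial.X, by simp [evalPQ]⟩]
  | algebraMap r => exact ⟨Polynomial.C (Polynomial.C r), by simp [evalPQ]⟩
  | add f g _ _ hf hg =>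
    obtain ⟨⟨F, rfl⟩, ⟨G, rfl⟩⟩ := And.intro hf hg
    exact ⟨F + G, map_add _ _ _⟩
  | mul f g _ _ hf hg =>
    obtain ⟨⟨F, rfl⟩, ⟨G, rfl⟩⟩ := And.intro hf hg
    exact ⟨F * G, map_mul _ _ _⟩

theorem evalPQ_eq (F : Polynomial (Polynomial ℝ)) :
    evalPQ F = evalPQ F.divX * q ℝ + Polynomial.aeval (p ℝ) (F.coeff 0) := by
  conv_lhs => rw [← Polynomial.divX_mul_X_add F]
  simp [evalPQ]

theorem evalPQ_mem_adjoin_int (F : Polynomial (Polynomial ℝ)) (hF : evalPQ F ∈ intCoeffs) :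
    evalPQ F ∈ ℤ[p ℝ, q ℝ] := by
  induction h : F.natDegree using Nat.strong_induction_on generalizing F with
  | _ n ih =>
    have hr : Polynomial.aeval (p ℝ) (F.coeff 0) ∈ ℤ[p ℝ, q ℝ] := by
      refine aeval_p_mem_adjoin_int ?_
      have := restrictToYAxis_mem_lifts hF
      rwa [evalPQ_eq, map_add, map_mul, restrictToYAxis_q, mul_zero, zero_add,
        restrictToYAxis_aeval_p] at this
    have hdiv : evalPQ F.divX ∈ ℤ[p ℝ, q ℝ] := by
      by_cases h0 : F.divX = 0
      · simp [h0]
      refine ih _ ?_ _ (mem_intCoeffs_of_q_mul ?_) rfl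
      · rw [← h, Polynomial.natDegree_divX_eq_natDegree_tsub_one]
        have : F.natDegree ≠ 0 := fun hd ↦ h0 (Polynomial.divX_eq_zero_iff.mpr
          (Polynomial.eq_C_of_natDegree_eq_zero hd))
        omega
      · have := sub_mem hF (adjoin_int_le_intCoeffs hr)
        rwa [evalPQ_eq F, add_sub_cancel_right, mul_comm] at this
    rw [evalPQ_eq]
    exact add_mem (mul_mem hdiv (Algebra.subset_adjoin (Set.mem_insert_of_mem _ rfl))) hr

end DihedralInvariants

theorem dihedral_invariants_with_integer_coeffs :
    {f : MvPolynomial (Fin 2) ℝ |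
        (aeval ![-(C (1 / 2 : ℝ)) * X 0 - C (Real.sqrt 3 / 2) * X 1,
              C (Real.sqrt 3 / 2) * X 0 - C (1 / 2 : ℝ) * X 1] f = f ∧
          aeval ![X 0, -X 1] f = f) ∧
          ∀ m : Fin 2 →₀ ℕ, ∃ n : ℤ, f.coeff m = (n : ℝ)} =
      ↑(Algebra.adjoin ℤ
        ({X 0 ^ 2 + X 1 ^ 2, X 0 ^ 3 - 3 * X 0 * X 1 ^ 2} : Set (MvPolynomial (Fin 2) ℝ))) := by
  ext f
  constructor
  · rintro ⟨⟨hσ, hτ⟩, hint⟩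
    obtain ⟨F, rfl⟩ := DihedralInvariants.exists_evalPQ_eq
      (DihedralInvariants.mem_adjoin_of_rotation_reflection hσ hτ)
    exact DihedralInvariants.evalPQ_mem_adjoin_int F
      (DihedralInvariants.mem_intCoeffs_iff.mpr hint)
  · intro hf
    have hreal := DihedralInvariants.adjoin_int_le_adjoin_real hf
    exact ⟨⟨DihedralInvariants.rotation_eq_self_of_mem hreal,
      DihedralInvariants.reflection_eq_self_of_mem hreal⟩,
      DihedralInvariants.mem_intCoeffs_iff.mp (DihedralInvariants.adjoin_int_le_intCoeffs hf)⟩
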